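/- arXiv:1604.06150 — 2 statements merged into one kernel-verified Lean document; each statement's English description precedes it below -/
import Mathlib

section
/- Let W, V be n×n real symmetric matrices (or vectors in ℝⁿ viewed as diagonal matrices). If σ₁(W) ≠ 0, σ₂(W) ≥ 0, and the polarized form σ₂(V,W) = 0, then σ₂(V,V) ≤ 0. -/
open Finset

/-- First elementary symmetric polynomial. -/
def sigma1 {n : ℕ} (κ : Fin n → ℝ) : ℝ := ∑ i, κ i

/-- Second elementary symmetric polynomial. -/
def sigma2 {n : ℕ} (κ : Fin n → ℝ) : ℝ :=
  ∑ p ∈ Finset.univ.filter (fun p : Fin n × Fin n => p.1 < p.2), κ p.1 * κ p.2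

/-- Third elementary symmetric polynomial. -/
def sigma3 {n : ℕ} (κ : Fin n → ℝ) : ℝ :=
  ∑ p ∈ Finset.univ.filter
      (fun p : Fin n × Fin n × Fin n => p.1 < p.2.1 ∧ p.2.1 < p.2.2),
    κ p.1 * κ p.2.1 * κ p.2.2

/-- Polarized form of `2 * sigma2` : `Q x y = ∑_{i ≠ j} x i * y j`. -/
def polarQ {n : ℕ} (x y : Fin n → ℝ) : ℝ :=
  ∑ p ∈ Finset.univ.offDiag, x p.1 * y p.2

/-! `Q(x, y) = σ₁(x) σ₁(y) - ⟨x, y⟩`, so `Q(V, W) = 0` reads `σ₁(V) σ₁(W) = ⟨V, W⟩` and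
`σ₂(W) ≥ 0` reads `|W|² ≤ σ₁(W)²`. Cauchy–Schwarz then gives
`σ₁(V)² σ₁(W)² = ⟨V, W⟩² ≤ |V|² |W|² ≤ |V|² σ₁(W)²`, and dividing by `σ₁(W)² > 0` yields
`Q(V, V) = σ₁(V)² - |V|² ≤ 0`. -/

lemma polarQ_eq_sigma1_mul_sigma1_sub {n : ℕ} (x y : Fin n → ℝ) :
    polarQ x y = sigma1 x * sigma1 y - ∑ i, x i * y i := by
  have h := sum_union (disjoint_diag_offDiag (univ : Finset (Fin n)))
    (f := fun p : Fin n × Fin n => x p.1 * y p.2)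
  rw [diag_union_offDiag, sum_diag, sum_product] at h
  rw [polarQ, sigma1, sigma1, sum_mul_sum, h]
  ring

lemma polarQ_self_eq_two_mul_sigma2 {n : ℕ} (κ : Fin n → ℝ) : polarQ κ κ = 2 * sigma2 κ := by
  set lt : Finset (Fin n × Fin n) := {p ∈ univ | p.1 < p.2}
  set gt : Finset (Fin n × Fin n) := {p ∈ univ | p.2 < p.1}
  have hsplit : (univ : Finset (Fin n)).offDiag = lt ∪ gt := by
    ext p
    simp only [lt, gt, mem_offDiag, mem_union, mem_filter, mem_univ, true_and]
    exact ne_iff_lt_or_gt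
  have hdisj : Disjoint lt gt := disjoint_filter.2 fun _ _ h₁ h₂ => h₁.not_gt h₂
  have hswap : ∑ p ∈ gt, κ p.1 * κ p.2 = ∑ p ∈ lt, κ p.1 * κ p.2 :=
    sum_nbij' Prod.swap Prod.swap (by simp [lt, gt]) (by simp [lt, gt]) (by simp) (by simp)
      fun _ _ => mul_comm _ _
  rw [polarQ, sigma2, hsplit, sum_union hdisj, hswap]
  ring

lemma polarQ_self_eq_sigma1_sq_sub {n : ℕ} (x : Fin n → ℝ) :
    polarQ x x = sigma1 x ^ 2 - ∑ i, x i ^ 2 := by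
  simp only [polarQ_eq_sigma1_mul_sigma1_sub, sq]

/-- If `σ₁(W) ≠ 0`, `σ₂(W) ≥ 0` and the polarized form `σ₂(V,W) = 0`,
then `σ₂(V,V) ≤ 0`. -/
theorem stmt0 {n : ℕ} (W V : Fin n → ℝ)
    (h1 : sigma1 W ≠ 0) (h2 : 0 ≤ sigma2 W) (h3 : polarQ V W = 0) :
    polarQ V V ≤ 0 := by
  have hVW : sigma1 V * sigma1 W = ∑ i, V i * W i := by
    rw [polarQ_eq_sigma1_mul_sigma1_sub] at h3
    linarith
  have hW : ∑ i, W i ^ 2 ≤ sigma1 W ^ 2 := by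
    have h := polarQ_self_eq_two_mul_sigma2 W
    rw [polarQ_self_eq_sigma1_sq_sub] at h
    linarith
  have hV : sigma1 V ^ 2 ≤ ∑ i, V i ^ 2 := by
    refine le_of_mul_le_mul_right ?_ (sq_pos_of_ne_zero h1)
    calc sigma1 V ^ 2 * sigma1 W ^ 2 = (∑ i, V i * W i) ^ 2 := by rw [← hVW]; ring
      _ ≤ (∑ i, V i ^ 2) * ∑ i, W i ^ 2 := sum_mul_sq_le_sq_mul_sq univ V W
      _ ≤ (∑ i, V i ^ 2) * sigma1 W ^ 2 :=
        mul_le_mul_of_nonneg_left hW (sum_nonneg fun i _ => sq_nonneg (V i))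
  rw [polarQ_self_eq_sigma1_sq_sub]
  linarith
end

section
/- Let κ ∈ ℝⁿ with κ₁ ≥ κ₂ ≥ … ≥ κₙ and σ₁(κ) ≥ 1 (so κ₁ ≥ 1/n). Suppose |κ₁κᵢ| ≤ C for all i ≠ 1 and |κᵢκⱼ| ≤ C for all i ≠ j. Then |σ₃(κ)| ≤ C'·(κ₁⁻¹ + κ₁⁻³) for a constant C' depending only on n and C, and consequently σ₁(κ)·σ₃(κ) ≥ −C'' for a constant C'' depending only on n and C. -/
open Finset

/-- Estimate (b2): bound on `σ₃` and lower bound on `σ₁ σ₃` with constants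
depending only on `n` and `C`. -/
theorem stmt9 (n : ℕ) [NeZero n] (C : ℝ) (hC : 0 ≤ C) :
    ∃ C' C'' : ℝ, 0 < C' ∧ 0 < C'' ∧
      ∀ κ : Fin n → ℝ,
        (∀ i j : Fin n, i ≤ j → κ j ≤ κ i) →
        1 ≤ sigma1 κ →
        (∀ i : Fin n, i ≠ 0 → |κ 0 * κ i| ≤ C) →
        (∀ i j : Fin n, i ≠ j → |κ i * κ j| ≤ C) →
        |sigma3 κ| ≤ C' * ((κ 0)⁻¹ + (κ 0)⁻¹ ^ 3) ∧
        sigma1 κ * sigma3 κ ≥ -C'' := by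
  have hn : (0:ℝ) < n := by exact_mod_cast Nat.pos_of_ne_zero (NeZero.ne n)
  set C' : ℝ := (n:ℝ)^3 * (C^2 + C^3) + 1 with hC'
  set C'' : ℝ := C' * n * (1 + (n:ℝ)^2) + 1 with hC''
  have hC'pos : 0 < C' := by positivity
  have hC''pos : 0 < C'' := by positivity
  clear_value C' C''
  refine ⟨C', C'', hC'pos, hC''pos, fun κ hmono hσ1 h0 hij => ?_⟩
  -- σ₁ ≤ n * κ 0
  have hσ1le : sigma1 κ ≤ n * κ 0 := by
    have : sigma1 κ ≤ ∑ _i : Fin n, κ 0 :=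
      Finset.sum_le_sum fun i _ => hmono 0 i (Fin.zero_le i)
    simpa using this
  have hκ0pos : 0 < κ 0 := by nlinarith
  have hκ0inv : 0 < (κ 0)⁻¹ := by positivity
  have hκ0n : (κ 0)⁻¹ ≤ n := by
    rw [inv_le_comm₀ hκ0pos hn]
    nlinarith [mul_inv_cancel₀ hn.ne']
  have hsmall : ∀ i : Fin n, i ≠ 0 → |κ i| ≤ C * (κ 0)⁻¹ := by
    intro i hi
    have h := h0 i hi
    rw [abs_mul, abs_of_pos hκ0pos, mul_comm] at h
    have h2 : |κ i| ≤ C / κ 0 := (le_div_iff₀ hκ0pos).mpr h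
    simpa [div_eq_mul_inv] using h2
  set B : ℝ := C^2 * (κ 0)⁻¹ + C^3 * (κ 0)⁻¹^3 with hB
  have hterm : ∀ p ∈ Finset.univ.filter
      (fun p : Fin n × Fin n × Fin n => p.1 < p.2.1 ∧ p.2.1 < p.2.2),
      |κ p.1 * κ p.2.1 * κ p.2.2| ≤ B := by
    intro p hp
    simp only [Finset.mem_filter, Finset.mem_univ, true_and] at hp
    obtain ⟨h12, h23⟩ := hp
    have hj : p.2.1 ≠ 0 := by
      intro h; rw [h] at h12; exact absurd h12 (by simp [Fin.lt_iff_val_lt_val])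
    have hk : p.2.2 ≠ 0 := by
      intro h; rw [h] at h23; exact absurd h23 (by simp [Fin.lt_iff_val_lt_val])
    have hbj := hsmall _ hj
    have hbk := hsmall _ hk
    have habsj : 0 ≤ |κ p.2.1| := abs_nonneg _
    have habsk : 0 ≤ |κ p.2.2| := abs_nonneg _
    by_cases hi : p.1 = 0
    · have h1 : |κ 0 * κ p.2.1| ≤ C := h0 _ hj
      rw [abs_mul, hi]
      have : |κ 0 * κ p.2.1| * |κ p.2.2| ≤ C * (C * (κ 0)⁻¹) := by
        apply mul_le_mul h1 hbk habsk hC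
      rw [hB]
      nlinarith [abs_nonneg (κ 0 * κ p.2.1), pow_pos hκ0inv 3, pow_nonneg hC 3]
    · have hbi := hsmall _ hi
      have habsi : 0 ≤ |κ p.1| := abs_nonneg _
      have hCinv : (0:ℝ) ≤ C * (κ 0)⁻¹ := by positivity
      have : |κ p.1 * κ p.2.1 * κ p.2.2| ≤ (C * (κ 0)⁻¹)^3 := by
        rw [abs_mul, abs_mul]
        calc |κ p.1| * |κ p.2.1| * |κ p.2.2|
            ≤ (C * (κ 0)⁻¹) * (C * (κ 0)⁻¹) * (C * (κ 0)⁻¹) := by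
              have hh : |κ p.1| * |κ p.2.1| ≤ (C * (κ 0)⁻¹) * (C * (κ 0)⁻¹) :=
                mul_le_mul hbi hbj habsj hCinv
              exact mul_le_mul hh hbk habsk (by positivity)
          _ = (C * (κ 0)⁻¹)^3 := by ring
      rw [hB]
      nlinarith [sq_nonneg C, mul_pos hκ0inv hκ0inv, sq_nonneg ((κ 0)⁻¹)]
  have hcard : (Finset.univ.filter
      (fun p : Fin n × Fin n × Fin n => p.1 < p.2.1 ∧ p.2.1 < p.2.2)).card ≤ n^3 := by
    calc _ ≤ (Finset.univ : Finset (Fin n × Fin n × Fin n)).card :=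
          Finset.card_filter_le _ _
      _ = n^3 := by simp [pow_succ, mul_comm, mul_assoc]
  have hBnonneg : 0 ≤ B := by rw [hB]; positivity
  have habs3 : |sigma3 κ| ≤ (n:ℝ)^3 * B := by
    calc |sigma3 κ| ≤ ∑ p ∈ Finset.univ.filter
          (fun p : Fin n × Fin n × Fin n => p.1 < p.2.1 ∧ p.2.1 < p.2.2),
          |κ p.1 * κ p.2.1 * κ p.2.2| := Finset.abs_sum_le_sum_abs _ _
      _ ≤ (Finset.univ.filter
          (fun p : Fin n × Fin n × Fin n => p.1 < p.2.1 ∧ p.2.1 < p.2.2)).card • B :=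
          Finset.sum_le_card_nsmul _ _ _ hterm
      _ ≤ (n^3 : ℕ) • B := nsmul_le_nsmul_left hBnonneg hcard
      _ = (n:ℝ)^3 * B := by simp [nsmul_eq_mul]
  have hmain : |sigma3 κ| ≤ C' * ((κ 0)⁻¹ + (κ 0)⁻¹ ^ 3) := by
    refine habs3.trans ?_
    rw [hB, hC']
    nlinarith [mul_nonneg (mul_nonneg (pow_nonneg hn.le 3) (pow_nonneg hC 3)) hκ0inv.le,
      mul_nonneg (mul_nonneg (pow_nonneg hn.le 3) (pow_nonneg hC 2)) (pow_pos hκ0inv 3).le,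
      hκ0inv.le, (pow_pos hκ0inv 3).le]
  refine ⟨hmain, ?_⟩
  have h1 : sigma1 κ * |sigma3 κ| ≤ (n * κ 0) * (C' * ((κ 0)⁻¹ + (κ 0)⁻¹ ^ 3)) := by
    apply mul_le_mul hσ1le hmain (abs_nonneg _)
    positivity
  have hinv : κ 0 * (κ 0)⁻¹ = 1 := mul_inv_cancel₀ hκ0pos.ne'
  have h2 : (n * κ 0) * (C' * ((κ 0)⁻¹ + (κ 0)⁻¹ ^ 3)) = n * C' * (1 + (κ 0)⁻¹^2) := by
    calc (n * κ 0) * (C' * ((κ 0)⁻¹ + (κ 0)⁻¹ ^ 3))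
        = (n:ℝ) * C' * ((κ 0 * (κ 0)⁻¹) + (κ 0 * (κ 0)⁻¹) * (κ 0)⁻¹^2) := by ring
      _ = n * C' * (1 + (κ 0)⁻¹^2) := by rw [hinv]; ring
  have h3 : n * C' * (1 + (κ 0)⁻¹^2) ≤ n * C' * (1 + (n:ℝ)^2) := by
    have ha : (κ 0)⁻¹^2 ≤ (n:ℝ)^2 := pow_le_pow_left₀ hκ0inv.le hκ0n 2
    have hb := mul_le_mul_of_nonneg_left
      (by linarith : (1 + (κ 0)⁻¹^2) ≤ (1 + (n:ℝ)^2))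
      (by positivity : (0:ℝ) ≤ (n:ℝ) * C')
    linarith
  have h4 : sigma1 κ * sigma3 κ ≥ -(sigma1 κ * |sigma3 κ|) := by
    have hσpos : 0 ≤ sigma1 κ := le_trans zero_le_one hσ1
    have h := mul_le_mul_of_nonneg_left (neg_abs_le (sigma3 κ)) hσpos
    rw [mul_neg] at h
    exact h
  rw [hC'']
  linarith [h1, h2, h3, h4]
end
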